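/- arXiv:1703.08668 — 11 statements merged into one kernel-verified Lean document; each statement's English description precedes it below -/
import Mathlib

section
/- Let G be a finite connected simple undirected graph on n ≥ 2 vertices and let κ(G) denote its vertex connectivity, i.e., the minimum number of vertices whose removal disconnects G or leaves a single vertex. Then the diameter of G satisfies diam(G) ≤ ⌊(n − 2)/κ(G)⌋ + 1. -/
open SimpleGraph

/-- The vertex connectivity of `G`: the minimum number of vertices whose removal results in
either a disconnected graph or a trivial (single-vertex) graph. -/
noncomputable def vertexConnectivity {V : Type*} [Fintype V] (G : SimpleGraph V) : ℕ :=
  sInf {n : ℕ | ∃ S : Finset V, S.card = n ∧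
    (¬ (G.induce ((S : Set V))ᶜ).Connected ∨ Nat.card ((S : Set V)ᶜ : Set V) = 1)}

/-!
Let `u, v` realise the diameter `d ≥ 2`. For `0 < i < d` the sphere of radius `i` around `u`
separates `u` from `v`, since the distance to `u` changes by at most one along an edge; hence each
of these `d - 1` pairwise disjoint spheres has at least `κ` vertices, and none contains `u` or `v`.
So `(d - 1) κ ≤ n - 2`.
-/

open Finset

namespace SimpleGraph

variable {V : Type*} {G : SimpleGraph V}

theorem Walk.exists_mem_support_dist_eq (u : V) {i : ℕ} :
    ∀ {a b : V} (p : G.Walk a b), G.dist u a ≤ i → i ≤ G.dist u b →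
      ∃ w ∈ p.support, G.dist u w = i
  | _, _, .nil, ha, hb => ⟨_, by simp, le_antisymm ha hb⟩
  | a, _, .cons (v := c) hac q, ha, hb => by
    by_cases hai : G.dist u a = i
    · exact ⟨a, by simp, hai⟩
    have hc : G.dist u c ≤ i := by
      have := hac.reachable.dist_triangle_right u
      rw [dist_eq_one_iff_adj.mpr hac] at this
      omega
    obtain ⟨w, hw, hwi⟩ := q.exists_mem_support_dist_eq u hc hb
    exact ⟨w, by simp [hw], hwi⟩

variable [Fintype V]

noncomputable def sphere (G : SimpleGraph V) (u : V) (i : ℕ) : Finset V :=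
  {w | G.dist u w = i}

@[simp]
theorem mem_sphere {u w : V} {i : ℕ} : w ∈ G.sphere u i ↔ G.dist u w = i := by
  simp [sphere]

theorem not_connected_induce_compl_sphere {u v : V} {i : ℕ} (hi : 0 < i) (hiv : i < G.dist u v) :
    ¬(G.induce (G.sphere u i : Set V)ᶜ).Connected := by
  intro hc
  have hu : u ∈ (G.sphere u i : Set V)ᶜ := by simp [hi.ne]
  have hv : v ∈ (G.sphere u i : Set V)ᶜ := by simp [hiv.ne']
  obtain ⟨p⟩ := hc.preconnected ⟨u, hu⟩ ⟨v, hv⟩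
  obtain ⟨w, hw, hwi⟩ :=
    (p.map (Embedding.induce _).toHom).exists_mem_support_dist_eq u (by simp) hiv.le
  rw [Walk.support_map, List.mem_map] at hw
  obtain ⟨x, -, rfl⟩ := hw
  exact x.2 (by simpa using hwi)

theorem sum_card_sphere_le {u v : V} (huv : u ≠ v) :
    ∑ i ∈ Ioo 0 (G.dist u v), #(G.sphere u i) ≤ Fintype.card V - 2 := by
  classical
  simp only [sphere, sum_card_fiberwise_eq_card_filter]
  calc _ ≤ #({u, v}ᶜ : Finset V) := card_le_card fun w hw => by
          simp only [mem_compl, mem_insert, mem_singleton]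
          rintro (rfl | rfl) <;> simp at hw
    _ = Fintype.card V - 2 := by rw [card_compl, card_pair huv]

end SimpleGraph

section

variable {V : Type*} [Fintype V] {G : SimpleGraph V}

theorem vertexConnectivity_le_card {S : Finset V} (hS : ¬(G.induce (S : Set V)ᶜ).Connected) :
    vertexConnectivity G ≤ #S :=
  Nat.sInf_le ⟨S, rfl, .inl hS⟩

theorem vertexConnectivity_pos (hconn : G.Connected) (hV : 2 ≤ Fintype.card V) :
    0 < vertexConnectivity G := by
  rw [Nat.pos_iff_ne_zero, vertexConnectivity, Ne, Nat.sInf_eq_zero, not_or]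
  constructor
  · rintro ⟨S, hS0, hS⟩
    obtain rfl := card_eq_zero.1 hS0
    rw [coe_empty, Set.compl_empty, Nat.card_univ, Nat.card_eq_fintype_card] at hS
    exact hS.elim (· ((induceUnivIso G).connected_iff.mpr hconn)) (by omega)
  · exact Set.nonempty_iff_ne_empty.1 ⟨_, univ, rfl, .inl fun h => by simpa using h.nonempty⟩

end

theorem stmt0 {V : Type*} [Fintype V] (G : SimpleGraph V)
    (hconn : G.Connected) (hn : 2 ≤ Fintype.card V) :
    G.diam ≤ (Fintype.card V - 2) / vertexConnectivity G + 1 := by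
  have := hconn.nonempty
  obtain ⟨u, v, huv⟩ := G.exists_dist_eq_diam
  rcases Nat.lt_or_ge G.diam 2 with hd | hd
  · exact le_add_left (by omega)
  have hκ := vertexConnectivity_pos hconn hn
  have hne : u ≠ v := by rintro rfl; simp at huv; omega
  have key : (G.diam - 1) * vertexConnectivity G ≤ Fintype.card V - 2 :=
    calc (G.diam - 1) * vertexConnectivity G
        = ∑ i ∈ Ioo 0 (G.dist u v), vertexConnectivity G := by simp [huv]
      _ ≤ ∑ i ∈ Ioo 0 (G.dist u v), #(G.sphere u i) := sum_le_sum fun i hi =>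
          vertexConnectivity_le_card (not_connected_induce_compl_sphere (mem_Ioo.1 hi).1
            (mem_Ioo.1 hi).2)
      _ ≤ Fintype.card V - 2 := sum_card_sphere_le hne
  have := (Nat.le_div_iff_mul_le hκ).mpr key
  omega
end

section
/- Let G be a finite simple undirected graph, k ≥ 1 an integer, and let G[U1] and G[U2] be two distinct k-vertex connected components (k-VCCs) of G. Then |U1 ∩ U2| ≤ k − 1. -/
open SimpleGraph

/-- `G[U]` is a `k`-vertex-connected (induced) subgraph of `G`: it has more than `k` vertices
and removing any set of at most `k − 1` vertices from it leaves a connected graph. -/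
def KVC {V : Type*} [DecidableEq V] (G : SimpleGraph V) (k : ℕ) (U : Finset V) : Prop :=
  k < U.card ∧ ∀ S : Finset V, S ⊆ U → S.card ≤ k - 1 →
    (G.induce ((U \ S : Finset V) : Set V)).Connected

/-- `G[U]` is a `k`-vertex connected component (`k`-VCC) of `G`: it is `k`-vertex-connected
and `U` is maximal with this property. -/
def KVCC {V : Type*} [DecidableEq V] (G : SimpleGraph V) (k : ℕ) (U : Finset V) : Prop :=
  KVC G k U ∧ ∀ U' : Finset V, U ⊆ U' → KVC G k U' → U' = U

open Finset

namespace KVC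

variable {V : Type*} [DecidableEq V] {G : SimpleGraph V} {k : ℕ}

theorem connected_induce_sdiff {U : Finset V} (hU : KVC G k U) {S : Finset V}
    (hS : #S ≤ k - 1) : (G.induce ((U \ S : Finset V) : Set V)).Connected := by
  have h := hU.2 (U ∩ S) inter_subset_left ((card_le_card inter_subset_right).trans hS)
  rwa [sdiff_inter_self_left] at h

/-- Removing at most `k - 1` vertices leaves a vertex of `U₁ ∩ U₂`, through which the two
surviving connected pieces are glued. -/
theorem union {U₁ U₂ : Finset V} (h₁ : KVC G k U₁) (h₂ : KVC G k U₂)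
    (hinter : k - 1 < #(U₁ ∩ U₂)) : KVC G k (U₁ ∪ U₂) := by
  refine ⟨h₁.1.trans_le (card_le_card subset_union_left), fun S _ hS => ?_⟩
  obtain ⟨v, hv⟩ := sdiff_nonempty_of_card_lt_card (hS.trans_lt hinter)
  rw [mem_sdiff, mem_inter] at hv
  rw [union_sdiff_distrib, coe_union]
  exact induce_union_connected (h₁.connected_induce_sdiff hS).preconnected
    (h₂.connected_induce_sdiff hS).preconnected
    ⟨v, mem_sdiff.2 ⟨hv.1.1, hv.2⟩, mem_sdiff.2 ⟨hv.1.2, hv.2⟩⟩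

end KVC

theorem stmt1_general {V : Type*} [DecidableEq V] (G : SimpleGraph V) (k : ℕ)
    (U1 U2 : Finset V) (h1 : KVCC G k U1) (h2 : KVCC G k U2)
    (hne : U1 ≠ U2) :
    (U1 ∩ U2).card ≤ k - 1 := by
  by_contra! hinter
  have hunion := h1.1.union h2.1 hinter
  exact hne ((h1.2 _ subset_union_left hunion).symm.trans (h2.2 _ subset_union_right hunion))

theorem stmt1 {V : Type*} [Fintype V] [DecidableEq V] (G : SimpleGraph V) (k : ℕ)
    (hk : 1 ≤ k) (U1 U2 : Finset V) (h1 : KVCC G k U1) (h2 : KVCC G k U2)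
    (hne : U1 ≠ U2) :
    (U1 ∩ U2).card ≤ k - 1 :=
  stmt1_general G k U1 U2 h1 h2 hne
end

section
/- Let G be a finite simple undirected graph on n vertices and k ≥ 1 an integer. Then the number of distinct k-vertex connected components (k-VCCs) of G is at most n/2. -/
open SimpleGraph

open scoped Classical in
/-- The k-VCCs of `G` that are contained in `W`. -/
noncomputable def Pset {V : Type*} [Fintype V] [DecidableEq V] (G : SimpleGraph V) (k : ℕ)
    (W : Finset V) : Finset (Finset V) :=
  Finset.univ.filter (fun U => U ⊆ W ∧ KVCC G k U)

lemma mem_Pset {V : Type*} [Fintype V] [DecidableEq V] {G : SimpleGraph V} {k : ℕ}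
    {W U : Finset V} : U ∈ Pset G k W ↔ U ⊆ W ∧ KVCC G k U := by
  simp [Pset]

lemma reach_mono {V : Type*} (G : SimpleGraph V) {s t : Set V} (hst : s ⊆ t) {a b : s}
    (h : (G.induce s).Reachable a b) :
    (G.induce t).Reachable ⟨a.1, hst a.2⟩ ⟨b.1, hst b.2⟩ := by
  let f : G.induce s →g G.induce t :=
    { toFun := fun x => ⟨x.1, hst x.2⟩
      map_rel' := fun {x y} hxy => hxy }
  exact h.map f

lemma key {V : Type*} [Fintype V] [DecidableEq V] (G : SimpleGraph V) (k : ℕ) (hk : 1 ≤ k) :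
    ∀ W : Finset V, (Pset G k W).Nonempty → 2 * (Pset G k W).card + k ≤ W.card + 1 := by
  classical
  intro W
  induction W using Finset.strongInduction with
  | _ W ih =>
    intro hne
    by_cases hW : KVC G k W
    · have hsub : Pset G k W ⊆ {W} := by
        intro U hU
        rw [mem_Pset] at hU
        rw [Finset.mem_singleton]
        exact (hU.2.2 W hU.1 hW).symm
      have hc : (Pset G k W).card ≤ 1 :=
        le_trans (Finset.card_le_card hsub) (by simp)
      have := hW.1
      omega
    · have hcpos : 0 < (Pset G k W).card := Finset.card_pos.mpr hne
      obtain ⟨U0, hU0⟩ := hne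
      rw [mem_Pset] at hU0
      have hkW : k < W.card := lt_of_lt_of_le hU0.2.1.1 (Finset.card_le_card hU0.1)
      rw [KVC] at hW
      push_neg at hW
      obtain ⟨S, hSW, hScard, hSdisc⟩ := hW hkW
      have hWS : (W \ S).card = W.card - S.card := Finset.card_sdiff_of_subset hSW
      have hWSne : (W \ S).Nonempty := Finset.card_pos.mp (by omega)
      have hnonempty : Nonempty ((W \ S : Finset V) : Set V) := by
        obtain ⟨x, hx⟩ := hWSne
        exact ⟨⟨x, by simpa using hx⟩⟩
      have hpre : ¬ (G.induce ((W \ S : Finset V) : Set V)).Preconnected := by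
        intro h; exact hSdisc ((SimpleGraph.connected_iff _).mpr ⟨h, hnonempty⟩)
      obtain ⟨a, b, hab⟩ : ∃ u v : ((W \ S : Finset V) : Set V),
          ¬ (G.induce ((W \ S : Finset V) : Set V)).Reachable u v := by
        by_contra hc
        push_neg at hc
        exact hpre fun u v => hc u v
      -- the reachable side from a
      set X : Finset V := (W \ S).filter (fun x => ∀ hx : x ∈ W \ S,
        (G.induce ((W \ S : Finset V) : Set V)).Reachable a ⟨x, Finset.mem_coe.mpr hx⟩) with hXdef
      have memX : ∀ x : V, x ∈ X ↔ x ∈ W \ S ∧ ∀ hx : x ∈ W \ S,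
          (G.induce ((W \ S : Finset V) : Set V)).Reachable a ⟨x, Finset.mem_coe.mpr hx⟩ := by
        intro x; simp [hXdef]
      have haWS : a.1 ∈ W \ S := Finset.mem_coe.mp a.2
      have hbWS : b.1 ∈ W \ S := Finset.mem_coe.mp b.2
      have haX : a.1 ∈ X := by
        rw [memX]
        refine ⟨haWS, fun hx => ?_⟩
        have : (⟨a.1, Finset.mem_coe.mpr hx⟩ : ((W \ S : Finset V) : Set V)) = a :=
          Subtype.ext rfl
        rw [this]
      have hbX : b.1 ∉ X := by
        rw [memX]
        rintro ⟨h1, h2⟩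
        have := h2 hbWS
        have hb : (⟨b.1, Finset.mem_coe.mpr hbWS⟩ : ((W \ S : Finset V) : Set V)) = b :=
          Subtype.ext rfl
        rw [hb] at this
        exact hab this
      have hXclosed : ∀ u v : V, u ∈ X → v ∈ W \ S → G.Adj u v → v ∈ X := by
        intro u v hu hv hadj
        rw [memX] at hu ⊢
        refine ⟨hv, fun hx => ?_⟩
        have hreach := hu.2 hu.1
        have hadj' : (G.induce ((W \ S : Finset V) : Set V)).Adj
            ⟨u, Finset.mem_coe.mpr hu.1⟩ ⟨v, Finset.mem_coe.mpr hx⟩ := hadj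
        exact hreach.trans hadj'.reachable
      set Y : Finset V := (W \ S) \ X with hYdef
      have hXWS : X ⊆ W \ S := Finset.filter_subset _ _
      set W1 : Finset V := X ∪ S with hW1def
      set W2 : Finset V := Y ∪ S with hW2def
      have hW1W : W1 ⊂ W := by
        constructor
        · intro x hx
          rcases Finset.mem_union.mp hx with h | h
          · exact (Finset.mem_sdiff.mp (hXWS h)).1
          · exact hSW h
        · intro hcon
          have hbW : b.1 ∈ W := (Finset.mem_sdiff.mp hbWS).1
          have := hcon hbW
          rcases Finset.mem_union.mp this with h | h
          · exact hbX h
          · exact (Finset.mem_sdiff.mp hbWS).2 h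
      have hW2W : W2 ⊂ W := by
        constructor
        · intro x hx
          rcases Finset.mem_union.mp hx with h | h
          · exact (Finset.mem_sdiff.mp (Finset.mem_sdiff.mp h).1).1
          · exact hSW h
        · intro hcon
          have haW : a.1 ∈ W := (Finset.mem_sdiff.mp haWS).1
          have := hcon haW
          rcases Finset.mem_union.mp this with h | h
          · exact (Finset.mem_sdiff.mp h).2 haX
          · exact (Finset.mem_sdiff.mp haWS).2 h
      -- every k-VCC inside W lies in W1 or W2
      have hsplit : Pset G k W ⊆ Pset G k W1 ∪ Pset G k W2 := by
        intro U hU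
        rw [mem_Pset] at hU
        obtain ⟨hUW, hUkvc, hUmax⟩ := hU
        set S' : Finset V := S ∩ U with hS'def
        have hS'U : S' ⊆ U := Finset.inter_subset_right
        have hS'card : S'.card ≤ k - 1 :=
          le_trans (Finset.card_le_card Finset.inter_subset_left) hScard
        have hconn := hUkvc.2 S' hS'U hS'card
        have hUS : U \ S' = U \ S := by
          ext x
          simp only [hS'def, Finset.mem_sdiff, Finset.mem_inter]
          tauto
        rw [hUS] at hconn
        have hsub2 : ((U \ S : Finset V) : Set V) ⊆ ((W \ S : Finset V) : Set V) := by
          intro x hx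
          simp only [Finset.coe_sdiff, Set.mem_diff, Finset.mem_coe] at hx ⊢
          exact ⟨hUW hx.1, hx.2⟩
        have hXorY : (U \ S) ⊆ X ∨ (U \ S) ⊆ Y := by
          by_cases hcase : ∀ x ∈ U \ S, x ∈ X
          · exact Or.inl hcase
          · push_neg at hcase
            obtain ⟨v, hv, hvX⟩ := hcase
            right
            intro u hu
            rw [hYdef, Finset.mem_sdiff]
            have huWS : u ∈ W \ S := Finset.mem_coe.mp (hsub2 (Finset.mem_coe.mpr hu))
            have hvWS : v ∈ W \ S := Finset.mem_coe.mp (hsub2 (Finset.mem_coe.mpr hv))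
            refine ⟨huWS, fun huX => ?_⟩
            have hreach := hconn.preconnected ⟨u, Finset.mem_coe.mpr hu⟩
              ⟨v, Finset.mem_coe.mpr hv⟩
            have hreach' := reach_mono G hsub2 hreach
            rw [memX] at huX
            have hau := huX.2 huX.1
            have hav : (G.induce ((W \ S : Finset V) : Set V)).Reachable a
                ⟨v, Finset.mem_coe.mpr hvWS⟩ := hau.trans hreach'
            apply hvX
            rw [memX]
            exact ⟨hvWS, fun hx => hav⟩
        rcases hXorY with h | h
        · apply Finset.mem_union.mpr; left
          rw [mem_Pset]
          refine ⟨?_, hUkvc, hUmax⟩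
          intro x hx
          by_cases hxS : x ∈ S
          · exact Finset.mem_union.mpr (Or.inr hxS)
          · exact Finset.mem_union.mpr (Or.inl (h (Finset.mem_sdiff.mpr ⟨hx, hxS⟩)))
        · apply Finset.mem_union.mpr; right
          rw [mem_Pset]
          refine ⟨?_, hUkvc, hUmax⟩
          intro x hx
          by_cases hxS : x ∈ S
          · exact Finset.mem_union.mpr (Or.inr hxS)
          · exact Finset.mem_union.mpr (Or.inl (h (Finset.mem_sdiff.mpr ⟨hx, hxS⟩)))
      have hcardle : (Pset G k W).card ≤ (Pset G k W1).card + (Pset G k W2).card :=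
        le_trans (Finset.card_le_card hsplit) (Finset.card_union_le _ _)
      have hW1c : W1.card ≤ X.card + S.card := Finset.card_union_le _ _
      have hW2c : W2.card ≤ Y.card + S.card := Finset.card_union_le _ _
      have hYc : Y.card = (W \ S).card - X.card := Finset.card_sdiff_of_subset hXWS
      have hXc : X.card ≤ (W \ S).card := Finset.card_le_card hXWS
      have hW1lt : W1.card < W.card := Finset.card_lt_card hW1W
      have hW2lt : W2.card < W.card := Finset.card_lt_card hW2W
      by_cases h1 : (Pset G k W1).Nonempty
      · by_cases h2 : (Pset G k W2).Nonempty
        · have i1 := ih W1 hW1W h1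
          have i2 := ih W2 hW2W h2
          omega
        · have h2c : (Pset G k W2).card = 0 := by
            rw [Finset.card_eq_zero]
            exact Finset.not_nonempty_iff_eq_empty.mp h2
          have i1 := ih W1 hW1W h1
          omega
      · have h1c : (Pset G k W1).card = 0 := by
          rw [Finset.card_eq_zero]
          exact Finset.not_nonempty_iff_eq_empty.mp h1
        by_cases h2 : (Pset G k W2).Nonempty
        · have i2 := ih W2 hW2W h2
          omega
        · have h2c : (Pset G k W2).card = 0 := by
            rw [Finset.card_eq_zero]
            exact Finset.not_nonempty_iff_eq_empty.mp h2
          omega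

/-- The number of distinct `k`-VCCs of a graph on `n` vertices is at most `n / 2`. -/
theorem stmt2 {V : Type*} [Fintype V] [DecidableEq V] (G : SimpleGraph V) (k : ℕ)
    (hk : 1 ≤ k) :
    (Set.ncard {U : Finset V | KVCC G k U} : ℝ) ≤ (Fintype.card V : ℝ) / 2 := by
  classical
  have hset : {U : Finset V | KVCC G k U} = ↑(Pset G k Finset.univ) := by
    ext U
    simp [mem_Pset, Finset.subset_univ]
  rw [hset, Set.ncard_coe_finset]
  rcases (Pset G k Finset.univ).eq_empty_or_nonempty with h | h
  · rw [h]
    simp only [Finset.card_empty, Nat.cast_zero]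
    positivity
  · have hkey := key G k hk Finset.univ h
    rw [Finset.card_univ] at hkey
    rw [le_div_iff₀ (by norm_num : (0:ℝ) < 2)]
    have h2 : (Pset G k Finset.univ).card * 2 ≤ Fintype.card V := by omega
    exact_mod_cast h2
end

section
/- Let G be a finite connected simple undirected graph that is not complete, let k ≥ 1 be an integer with κ(G) ≤ k − 1, let S be a minimum vertex cut of G, and let u ∈ S. Then there exist two distinct vertices v, v' ∈ N(u) such that v ≢^k v'. -/
open SimpleGraph

/-- `u ≡^k v` in `G`: there is no set `S ⊆ V ∖ {u, v}` with `|S| ≤ k − 1` such that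
`u` and `v` lie in different connected components of `G − S`. -/
def kLocConn {V : Type*} (G : SimpleGraph V) (k : ℕ) (u v : V) : Prop :=
  ∀ (S : Finset V) (hu : u ∉ S) (hv : v ∉ S), S.card ≤ k - 1 →
    (G.induce ((S : Set V))ᶜ).Reachable ⟨u, hu⟩ ⟨v, hv⟩

/-- `S` is a vertex cut of `G`: a proper subset of the vertices whose removal
disconnects the graph. -/
def IsVertexCut {V : Type*} [Fintype V] (G : SimpleGraph V) (S : Finset V) : Prop :=
  S ≠ Finset.univ ∧ ¬ (G.induce ((S : Set V))ᶜ).Connected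

/-!
Since `S` is a minimum cut, `G − (S ∖ {u})` is connected, so a vertex `a` of any component of
`G − S` is joined to `u` by a walk avoiding `S ∖ {u}`; the vertex preceding the first visit
of `u` is a neighbour of `u` in the component of `a`. Picking such neighbours `v`, `v'` in two
different components of `G − S` gives `v ≢^k v'`, with `S` itself as the separating set.
-/

namespace SimpleGraph

variable {V : Type*} {G : SimpleGraph V}

lemma Walk.exists_adj_reachable_induce {s : Set V} {a u : V} (p : G.Walk a u)
    (hp : ∀ x ∈ p.support, x ∈ insert u s) (hu : u ∉ s) (ha : a ∈ s) :
    ∃ v, ∃ hv : v ∈ s, G.Adj u v ∧ (G.induce s).Reachable ⟨a, ha⟩ ⟨v, hv⟩ := by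
  induction p with
  | nil => exact absurd ha hu
  | @cons a c u hac q ih =>
    by_cases hcu : c = u
    · subst hcu
      exact ⟨a, ha, hac.symm, .rfl⟩
    · have hc : c ∈ s := (hp c (by simp)).resolve_left hcu
      obtain ⟨v, hv, huv, hcv⟩ := ih (fun x hx => hp x (by simp [hx])) hu hc
      exact ⟨v, hv, huv, (Adj.reachable (induce_adj.2 hac)).trans hcv⟩

lemma exists_adj_reachable_induce_of_preconnected_insert {s : Set V} {a u : V}
    (h : (G.induce (insert u s)).Preconnected) (hu : u ∉ s) (ha : a ∈ s) :
    ∃ v, ∃ hv : v ∈ s, G.Adj u v ∧ (G.induce s).Reachable ⟨a, ha⟩ ⟨v, hv⟩ := by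
  obtain ⟨p⟩ := h ⟨a, Set.mem_insert_of_mem u ha⟩ ⟨u, Set.mem_insert u s⟩
  refine (p.map (Embedding.induce _).toHom).exists_adj_reachable_induce ?_ hu ha
  simp only [Walk.support_map, List.mem_map]
  rintro _ ⟨x, -, rfl⟩
  exact x.2

lemma IsVertexCut.not_preconnected [Fintype V] {S : Finset V} (h : IsVertexCut G S) :
    ¬ (G.induce (S : Set V)ᶜ).Preconnected := by
  obtain ⟨z, hz⟩ := not_forall.mp (mt Finset.eq_univ_iff_forall.mpr h.1)
  have : Nonempty ((S : Set V)ᶜ : Set V) := ⟨⟨z, hz⟩⟩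
  exact fun hpre => h.2 ⟨hpre⟩

lemma connected_induce_insert_compl_of_forall_card_le [Fintype V] {S : Finset V} {u : V}
    (hmin : ∀ T : Finset V, IsVertexCut G T → S.card ≤ T.card) (hu : u ∈ S) :
    (G.induce (insert u (S : Set V)ᶜ)).Connected := by
  classical
  have hT : insert u (S : Set V)ᶜ = ((S.erase u : Finset V) : Set V)ᶜ := by
    ext x
    by_cases hx : x = u <;> simp [hx]
  rw [hT]
  by_contra hdisc
  have hne : S.erase u ≠ Finset.univ := fun he =>
    Finset.notMem_erase u S (Finset.eq_univ_iff_forall.mp he u)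
  exact (hmin _ ⟨hne, hdisc⟩).not_gt (Finset.card_erase_lt_of_mem hu)

end SimpleGraph

theorem stmt4_general {V : Type*} [Fintype V] (G : SimpleGraph V)
    (k : ℕ)
    (S : Finset V) (hcut : IsVertexCut G S)
    (hmin : ∀ T : Finset V, IsVertexCut G T → S.card ≤ T.card)
    (hκ : S.card ≤ k - 1) (u : V) (hu : u ∈ S) :
    ∃ v v' : V, G.Adj u v ∧ G.Adj u v' ∧ v ≠ v' ∧ ¬ kLocConn G k v v' := by
  obtain ⟨a, b, hab⟩ :
      ∃ a b : ((S : Set V)ᶜ : Set V), ¬ (G.induce (S : Set V)ᶜ).Reachable a b := by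
    simpa only [Preconnected, not_forall] using hcut.not_preconnected
  have hpre := (connected_induce_insert_compl_of_forall_card_le hmin hu).preconnected
  have huS : u ∉ (S : Set V)ᶜ := fun h => h hu
  have hnbr := fun {x} (hx : x ∈ (S : Set V)ᶜ) =>
    exists_adj_reachable_induce_of_preconnected_insert hpre huS hx
  obtain ⟨v, hv, huv, hav⟩ := hnbr a.2
  obtain ⟨v', hv', huv', hbv'⟩ := hnbr b.2
  have hvv' : ¬ (G.induce (S : Set V)ᶜ).Reachable ⟨v, hv⟩ ⟨v', hv'⟩ :=
    fun h => hab (hav.trans (h.trans hbv'.symm))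
  refine ⟨v, v', huv, huv', ?_, fun hloc => hvv' (hloc S hv hv' hκ)⟩
  rintro rfl
  exact hvv' .rfl

theorem stmt4 {V : Type*} [Fintype V] (G : SimpleGraph V)
    (hconn : G.Connected) (hnc : ∃ a b : V, a ≠ b ∧ ¬ G.Adj a b)
    (k : ℕ) (hk : 1 ≤ k)
    (S : Finset V) (hcut : IsVertexCut G S)
    (hmin : ∀ T : Finset V, IsVertexCut G T → S.card ≤ T.card)
    (hκ : S.card ≤ k - 1) (u : V) (hu : u ∈ S) :
    ∃ v v' : V, G.Adj u v ∧ G.Adj u v' ∧ v ≠ v' ∧ ¬ kLocConn G k v v' :=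
  stmt4_general G k S hcut hmin hκ u hu
end

section
/- Let G be a finite simple undirected graph, k ≥ 1 an integer, and a, b, c pairwise distinct vertices of G such that b is a side-vertex. If a ≡^k b and b ≡^k c, then a ≡^k c. -/
open SimpleGraph

/-- `w` is a side-vertex: it is not contained in any vertex cut of size at most `k − 1`. -/
def IsSideVertex {V : Type*} [Fintype V] (G : SimpleGraph V) (k : ℕ) (w : V) : Prop :=
  ∀ S : Finset V, IsVertexCut G S → S.card ≤ k - 1 → w ∉ S

theorem stmt5 {V : Type*} [Fintype V] (G : SimpleGraph V) (k : ℕ) (hk : 1 ≤ k)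
    (a b c : V) (hab : a ≠ b) (hbc : b ≠ c) (hac : a ≠ c)
    (hside : IsSideVertex G k b)
    (h1 : kLocConn G k a b) (h2 : kLocConn G k b c) :
    kLocConn G k a c := by
  intro S ha hc hScard
  by_cases hb : b ∈ S
  · -- S contains the side-vertex b, hence S is not a vertex cut, so G−S connected
    have hne : S ≠ Finset.univ := fun h => ha (h ▸ Finset.mem_univ a)
    have hconn : (G.induce ((S : Set V))ᶜ).Connected := by
      by_contra h
      exact hside S ⟨hne, h⟩ hScard hb
    exact hconn.preconnected _ _
  · exact (h1 S ha hb hScard).trans (h2 S hb hc hScard)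
end

section
/- Let G be a finite connected simple undirected graph that is not complete, and let k ≥ 1 be an integer with κ(G) ≤ k − 1. Let u be a vertex such that every two distinct neighbors v, v' of u are either adjacent in G or have at least k common neighbors, i.e., |N(v) ∩ N(v')| ≥ k. Then u is not contained in any minimum vertex cut of G. -/
open SimpleGraph

/-- The vertex connectivity of `G`: the minimum cardinality of a vertex cut of `G`. -/
noncomputable def vConn {V : Type*} [Fintype V] (G : SimpleGraph V) : ℕ :=
  sInf {n : ℕ | ∃ S : Finset V, IsVertexCut G S ∧ S.card = n}

lemma walk_avoid {V : Type*} (G : SimpleGraph V) (s : Set V) (u : V) (hu : u ∉ s)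
    (hmerge : ∀ (a b : V) (ha : a ∈ s) (hb : b ∈ s), G.Adj u a → G.Adj u b →
      (G.induce s).Reachable ⟨a, ha⟩ ⟨b, hb⟩) :
    ∀ (x y : ↥(insert u s)) (_ : (G.induce (insert u s)).Walk x y) (hy : (y : V) ∈ s),
      ((hx : (x : V) ∈ s) → (G.induce s).Reachable ⟨x, hx⟩ ⟨y, hy⟩) ∧
      ((x : V) = u → ∀ (a : V) (ha : a ∈ s), G.Adj u a →
        (G.induce s).Reachable ⟨a, ha⟩ ⟨y, hy⟩) := by
  intro x y p
  induction p with
  | nil =>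
    intro hy
    exact ⟨fun hx => Reachable.refl _, fun hxu a ha hadj => absurd (hxu ▸ hy) hu⟩
  | @cons x z y h q ih =>
    intro hy
    have hadj : G.Adj (x : V) (z : V) := h
    constructor
    · intro hx
      by_cases hz : (z : V) ∈ s
      · have h1 : (G.induce s).Adj ⟨(x:V), hx⟩ ⟨(z:V), hz⟩ := hadj
        exact h1.reachable.trans ((ih hy).1 hz)
      · have hzu : (z : V) = u := by
          rcases z.2 with h' | h'
          · exact h'
          · exact absurd h' hz
        exact (ih hy).2 hzu (x : V) hx (by rw [hzu] at hadj; exact hadj.symm)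
    · intro hxu a ha haadj
      have hzu : (z : V) ≠ u := by
        intro hh
        rw [hxu, hh] at hadj
        exact G.irrefl hadj
      have hz : (z : V) ∈ s := by
        rcases z.2 with h' | h'
        · exact absurd h' hzu
        · exact h'
      have hzadj : G.Adj u (z : V) := by rw [hxu] at hadj; exact hadj
      exact (hmerge a (z:V) ha hz haadj hzadj).trans ((ih hy).1 hz)

theorem stmt8 {V : Type*} [Fintype V] (G : SimpleGraph V)
    (hconn : G.Connected) (hnc : ∃ a b : V, a ≠ b ∧ ¬ G.Adj a b)
    (k : ℕ) (hk : 1 ≤ k) (hκ : vConn G ≤ k - 1) (u : V)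
    (hssv : ∀ v v' : V, G.Adj u v → G.Adj u v' → v ≠ v' →
      G.Adj v v' ∨ k ≤ (G.neighborSet v ∩ G.neighborSet v').ncard) :
    ∀ S : Finset V, IsVertexCut G S → S.card = vConn G → u ∉ S := by
  classical
  intro S hcut hcard huS
  obtain ⟨hSuniv, hdis⟩ := hcut
  set s : Set V := ((S : Set V))ᶜ with hs
  have hus : u ∉ s := by simp [hs, huS]
  -- s is nonempty
  obtain ⟨w, hwS⟩ : ∃ w, w ∉ S := by
    by_contra h
    push_neg at h
    exact hSuniv (Finset.eq_univ_iff_forall.mpr h)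
  have hws : w ∈ s := by simpa [hs] using hwS
  have hne : Nonempty ↥s := ⟨⟨w, hws⟩⟩
  -- get two non-reachable vertices in s
  have hpre : ¬ (G.induce s).Preconnected := by
    intro hp
    exact hdis (SimpleGraph.Connected.mk hp)
  rw [SimpleGraph.Preconnected] at hpre
  push_neg at hpre
  obtain ⟨x, y, hxy⟩ := hpre
  by_cases hcase : ∀ (a b : V) (ha : a ∈ s) (hb : b ∈ s), G.Adj u a → G.Adj u b →
      (G.induce s).Reachable ⟨a, ha⟩ ⟨b, hb⟩
  · -- S.erase u is a smaller cut
    set T := S.erase u with hT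
    have hset : ((T : Set V))ᶜ = insert u s := by
      ext z
      simp only [hT, Finset.coe_erase, Set.mem_compl_iff, Set.mem_diff, Set.mem_insert_iff,
        hs, Finset.mem_coe, Set.mem_singleton_iff]
      by_cases hz : z = u <;> simp [hz, huS]
    have hTcut : IsVertexCut G T := by
      constructor
      · intro h
        have : u ∈ T := h ▸ Finset.mem_univ u
        exact (Finset.notMem_erase u S) this
      · rw [hset]
        intro hc
        obtain ⟨p⟩ := hc.preconnected ⟨x, Set.mem_insert_of_mem _ x.2⟩
          ⟨y, Set.mem_insert_of_mem _ y.2⟩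
        have := (walk_avoid G s u hus hcase _ _ p y.2).1 x.2
        exact hxy this
    have hle : vConn G ≤ T.card := Nat.sInf_le ⟨T, hTcut, rfl⟩
    have : T.card < S.card := Finset.card_erase_lt_of_mem huS
    omega
  · push_neg at hcase
    obtain ⟨a, b, ha, hb, hua, hub, hnr⟩ := hcase
    have hab : a ≠ b := by
      rintro rfl
      exact hnr (Reachable.refl _)
    have hnadj : ¬ G.Adj a b := by
      intro h
      exact hnr (SimpleGraph.Adj.reachable (by exact h : (G.induce s).Adj ⟨a, ha⟩ ⟨b, hb⟩))
    have hkle : k ≤ (G.neighborSet a ∩ G.neighborSet b).ncard :=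
      (hssv a b hua hub hab).resolve_left hnadj
    have hsub : G.neighborSet a ∩ G.neighborSet b ⊆ (S : Set V) := by
      intro z hz
      by_contra hzS
      have hzs : z ∈ s := by simpa [hs] using hzS
      have h1 : (G.induce s).Adj ⟨a, ha⟩ ⟨z, hzs⟩ := hz.1
      have h2 : (G.induce s).Adj ⟨z, hzs⟩ ⟨b, hb⟩ := hz.2.symm
      exact hnr (h1.reachable.trans h2.reachable)
    have hle : (G.neighborSet a ∩ G.neighborSet b).ncard ≤ S.card := by
      have := Set.ncard_le_ncard hsub (S : Set V).toFinite
      simpa [Set.ncard_coe_finset] using this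
    omega
end

section
/- Let G be a finite simple undirected graph, k ≥ 1 an integer, and u, v distinct vertices. Suppose there exist k pairwise distinct vertices w_1, …, w_k, each a neighbor of v and each distinct from u, such that u ≡^k w_i for every 1 ≤ i ≤ k. Then u ≡^k v. -/
open SimpleGraph

theorem stmt9 {V : Type*} [Fintype V] (G : SimpleGraph V) (k : ℕ) (hk : 1 ≤ k)
    (u v : V) (huv : u ≠ v) (W : Finset V) (hWcard : W.card = k)
    (hW : ∀ w ∈ W, G.Adj v w ∧ w ≠ u ∧ kLocConn G k u w) :
    kLocConn G k u v := by
  intro S hu hv hS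
  have hWS : ¬ W ⊆ S := fun h => by
    have := Finset.card_le_card h
    omega
  obtain ⟨w, hwW, hwS⟩ := Finset.not_subset.mp hWS
  obtain ⟨hadj, hwu, hconn⟩ := hW w hwW
  exact (hconn S hu hwS hS).trans (Adj.reachable hadj.symm)
end

section
/- Let G be a finite simple undirected graph, k ≥ 1 an integer, u a vertex, and C ⊆ V a set of vertices with u ∉ C such that every two distinct vertices of C are k-locally connected (C is a side-group), i.e., x ≡^k y for all distinct x, y ∈ C. If there exist at least k distinct vertices v ∈ C with u ≡^k v, then u ≡^k w for every vertex w ∈ C. -/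
open SimpleGraph

theorem stmt10 {V : Type*} [Fintype V] (G : SimpleGraph V) (k : ℕ) (hk : 1 ≤ k)
    (u : V) (C : Finset V) (huC : u ∉ C)
    (hgroup : ∀ x ∈ C, ∀ y ∈ C, x ≠ y → kLocConn G k x y)
    (hdep : ∃ T : Finset V, T ⊆ C ∧ k ≤ T.card ∧ ∀ v ∈ T, kLocConn G k u v) :
    ∀ w ∈ C, kLocConn G k u w := by
  obtain ⟨T, hTC, hTk, hT⟩ := hdep
  intro w hw S huS hwS hS
  have hex : ∃ v ∈ T, v ∉ S := by
    by_contra h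
    push_neg at h
    have : T ⊆ S := fun x hx => h x hx
    have := Finset.card_le_card this
    omega
  obtain ⟨v, hvT, hvS⟩ := hex
  by_cases hvw : v = w
  · subst hvw
    exact hT v hvT S huS hwS hS
  · exact (hT v hvT S huS hvS hS).trans
      (hgroup v (hTC hvT) w hw hvw S hvS hwS hS)
end

section
/- Let G be a finite simple undirected graph, k ≥ 1 an integer, S a vertex cut of G, C a connected component of G − S, and let G_i = G[V(C) ∪ S] be the induced subgraph on V(C) ∪ S. If a vertex u ∈ V(C) is a strong side-vertex of G_i, then u is a strong side-vertex of G. -/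
open SimpleGraph

/-- `w` is a strong side-vertex of `H` (w.r.t. `k`): every two distinct neighbors of `w`
in `H` are either adjacent in `H` or have at least `k` common neighbors in `H`. -/
def StrongSideVertex {W : Type*} (H : SimpleGraph W) (k : ℕ) (w : W) : Prop :=
  ∀ v v' : W, H.Adj w v → H.Adj w v' → v ≠ v' →
    H.Adj v v' ∨ k ≤ (H.neighborSet v ∩ H.neighborSet v').ncard

theorem stmt13 {V : Type*} [Fintype V] (G : SimpleGraph V) (k : ℕ) (hk : 1 ≤ k)
    (S : Finset V) (hcut : IsVertexCut G S)
    (C : (G.induce ((S : Set V))ᶜ).ConnectedComponent)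
    (u : V) (hu : u ∈ Subtype.val '' C.supp)
    (hside : StrongSideVertex
      (G.induce ((Subtype.val '' C.supp) ∪ (S : Set V))) k ⟨u, Or.inl hu⟩) :
    StrongSideVertex G k u := by
  intro v v' hv hv' hne
  have mem : ∀ w : V, G.Adj u w → w ∈ (Subtype.val '' C.supp) ∪ (S : Set V) := by
    intro w hw
    by_cases hwS : w ∈ (S : Set V)
    · exact Or.inr hwS
    · left
      obtain ⟨u', hu', huv⟩ := hu
      refine ⟨⟨w, hwS⟩, ?_, rfl⟩
      have hadj : (G.induce ((S : Set V))ᶜ).Adj u' ⟨w, hwS⟩ := by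
        show G.Adj (↑u') w
        rw [huv]; exact hw
      rw [SimpleGraph.ConnectedComponent.mem_supp_iff] at hu' ⊢
      rw [← hu']
      exact SimpleGraph.ConnectedComponent.sound hadj.symm.reachable
  have hvmem := mem v hv
  have hv'mem := mem v' hv'
  set T : Set V := (Subtype.val '' C.supp) ∪ (S : Set V) with hT
  have h := hside ⟨v, hvmem⟩ ⟨v', hv'mem⟩ hv hv' (fun h => hne (congrArg Subtype.val h))
  rcases h with h | h
  · exact Or.inl h
  · right
    calc k ≤ (((G.induce T).neighborSet ⟨v, hvmem⟩) ∩
          ((G.induce T).neighborSet ⟨v', hv'mem⟩)).ncard := h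
      _ = (Subtype.val '' (((G.induce T).neighborSet ⟨v, hvmem⟩) ∩
          ((G.induce T).neighborSet ⟨v', hv'mem⟩))).ncard :=
        (Set.ncard_image_of_injective _ Subtype.val_injective).symm
      _ ≤ (G.neighborSet v ∩ G.neighborSet v').ncard := by
        refine Set.ncard_le_ncard ?_ (Set.toFinite _)
        rintro x ⟨⟨y, hy⟩, ⟨h1, h2⟩, rfl⟩
        exact ⟨h1, h2⟩
end

section
/- Let G be a finite simple undirected graph, k ≥ 1 an integer, S a vertex cut of G, C a connected component of G − S, and let G_i = G[V(C) ∪ S] be the induced subgraph on V(C) ∪ S. If a vertex u ∈ V(C) ∪ S is a strong side-vertex of G and N(u) ∩ S = ∅, then u is a strong side-vertex of G_i. -/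
open SimpleGraph

theorem stmt14 {V : Type*} [Fintype V] (G : SimpleGraph V) (k : ℕ) (hk : 1 ≤ k)
    (S : Finset V) (hcut : IsVertexCut G S)
    (C : (G.induce ((S : Set V))ᶜ).ConnectedComponent)
    (u : V) (hu : u ∈ (Subtype.val '' C.supp) ∪ (S : Set V))
    (hside : StrongSideVertex G k u)
    (hNS : ∀ v : V, G.Adj u v → v ∉ S) :
    StrongSideVertex (G.induce ((Subtype.val '' C.supp) ∪ (S : Set V))) k ⟨u, hu⟩ := by
  intro v v' hv hv' hne
  have hadj : G.Adj u v.val := hv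
  have hadj' : G.Adj u v'.val := hv'
  have hvS : v.val ∉ S := hNS _ hadj
  have hv'S : v'.val ∉ S := hNS _ hadj'
  have hvC : v.val ∈ Subtype.val '' C.supp := by
    rcases v.2 with h | h
    · exact h
    · exact absurd h hvS
  have hv'C : v'.val ∈ Subtype.val '' C.supp := by
    rcases v'.2 with h | h
    · exact h
    · exact absurd h hv'S
  -- key: a neighbor of a vertex of C that is not in S is in C
  have key : ∀ x : V, x ∈ Subtype.val '' C.supp → ∀ w : V, w ∉ S → G.Adj x w →
      w ∈ Subtype.val '' C.supp := by
    rintro x ⟨x', hx', rfl⟩ w hwS hxw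
    have hw : w ∈ ((S : Set V))ᶜ := hwS
    have hadjI : (G.induce ((S : Set V))ᶜ).Adj x' ⟨w, hw⟩ := by
      simpa using hxw
    refine ⟨⟨w, hw⟩, ?_, rfl⟩
    rw [ConnectedComponent.mem_supp_iff] at hx' ⊢
    rw [← hx']
    exact (ConnectedComponent.sound hadjI.reachable).symm
  have hne' : v.val ≠ v'.val := fun h => hne (Subtype.ext h)
  rcases hside v.val v'.val hadj hadj' hne' with h | h
  · exact Or.inl h
  · right
    have himg : Subtype.val ''
        ((G.induce ((Subtype.val '' C.supp) ∪ (S : Set V))).neighborSet v ∩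
          (G.induce ((Subtype.val '' C.supp) ∪ (S : Set V))).neighborSet v') =
        G.neighborSet v.val ∩ G.neighborSet v'.val := by
      ext w
      constructor
      · rintro ⟨w', ⟨h1, h2⟩, rfl⟩
        exact ⟨h1, h2⟩
      · rintro ⟨h1, h2⟩
        have hwmem : w ∈ (Subtype.val '' C.supp) ∪ (S : Set V) := by
          by_cases hwS : w ∈ S
          · exact Or.inr hwS
          · exact Or.inl (key v.val hvC w hwS h1)
        exact ⟨⟨w, hwmem⟩, ⟨h1, h2⟩, rfl⟩
    calc k ≤ (G.neighborSet v.val ∩ G.neighborSet v'.val).ncard := h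
      _ = _ := by
        rw [← himg, Set.ncard_image_of_injective _ Subtype.val_injective]
end

section
/- Let G be a finite simple undirected graph, k ≥ 1 an integer, and u a vertex. If there exist two distinct neighbors v, v' of u with v ≢^k v', then u is contained in some vertex cut S of G with |S| ≤ k − 1; in particular, u is not a side-vertex. -/
open SimpleGraph

theorem stmt16 {V : Type*} [Fintype V] (G : SimpleGraph V) (k : ℕ) (hk : 1 ≤ k)
    (u : V) (h : ∃ v v' : V, G.Adj u v ∧ G.Adj u v' ∧ v ≠ v' ∧ ¬ kLocConn G k v v') :
    (∃ S : Finset V, IsVertexCut G S ∧ S.card ≤ k - 1 ∧ u ∈ S) ∧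
    ¬ IsSideVertex G k u := by
  obtain ⟨v, v', hv, hv', hne, hloc⟩ := h
  simp only [kLocConn, not_forall] at hloc
  obtain ⟨S, hvS, hv'S, hcard, hreach⟩ := hloc
  have huS : u ∈ S := by
    by_contra huS
    apply hreach
    have h1 : (G.induce ((S : Set V))ᶜ).Adj ⟨v, hvS⟩ ⟨u, huS⟩ := hv.symm
    have h2 : (G.induce ((S : Set V))ᶜ).Adj ⟨u, huS⟩ ⟨v', hv'S⟩ := hv'
    exact h1.reachable.trans h2.reachable
  have hcut : IsVertexCut G S := by
    constructor
    · intro heq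
      exact hvS (heq ▸ Finset.mem_univ v)
    · intro hconn
      exact hreach (hconn.preconnected _ _)
  refine ⟨⟨S, hcut, hcard, huS⟩, fun hs => hs S hcut hcard huS⟩
end
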